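/- arXiv:1009.0682 — 5 statements merged into one kernel-verified Lean document; each statement's English description precedes it below -/
import Mathlib

section
/- Let L be a semi-primary lattice, let u ∈ L, and let φ be a partition with φ ≤ tp(u) (componentwise). Then there exists an element v ∈ L with v ≤ u and tp(v) = φ. -/
/-- The height of an element: the greatest length of chains from `⊥` to `u`. -/
noncomputable def ht {L : Type*} [Preorder L] (u : L) : ℕ := (Order.height u).toNat

/-- An element `z` is a cycle if the interval `[⊥, z]` is a chain. -/
def IsCycle {L : Type*} [Lattice L] [BoundedOrder L] (z : L) : Prop :=
  IsChain (· ≤ ·) (Set.Icc (⊥ : L) z)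

/-- An element `z` is a dual cycle if the interval `[z, ⊤]` is a chain. -/
def IsDualCycle {L : Type*} [Lattice L] [BoundedOrder L] (z : L) : Prop :=
  IsChain (· ≤ ·) (Set.Icc z (⊤ : L))

/-- A lattice is semi-primary if every element is a join of cycles and a meet of
dual cycles. -/
def IsSemiPrimary (L : Type*) [Lattice L] [BoundedOrder L] : Prop :=
  ∀ u : L, (∃ s : Finset L, (∀ z ∈ s, IsCycle z) ∧ u = s.sup id) ∧
           (∃ s : Finset L, (∀ z ∈ s, IsDualCycle z) ∧ u = s.inf id)

/-- A finite family of lattice elements is independent. -/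
def IndepFun {L : Type*} [Lattice L] [BoundedOrder L] {n : ℕ} (z : Fin n → L) : Prop :=
  ∀ i, ((Finset.univ.erase i).sup z) ⊓ z i = ⊥

/-- A partition is (represented by) a multiset of positive natural numbers. -/
def IsPartition (μ : Multiset ℕ) : Prop := ∀ p ∈ μ, 0 < p

/-- The `i`-th largest part of a partition (0-indexed, 0 if out of range). -/
def partGet (μ : Multiset ℕ) (i : ℕ) : ℕ := ((μ.sort (· ≤ ·)).reverse).getD i 0

/-- Componentwise order on partitions: `μ ≤ λ` iff `μᵢ ≤ λᵢ` for all `i`. -/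
def PartLE (μ lam : Multiset ℕ) : Prop := ∀ i, partGet μ i ≤ partGet lam i

/-- For `λ = (sⁿ)` and `μ ≤ λ`, the partition `λ − μ = (s − μₙ, …, s − μ₁)`. -/
def partSub (s n : ℕ) (μ : Multiset ℕ) : Multiset ℕ :=
  Multiset.filter (fun x => 0 < x)
    (↑((List.range n).map (fun i => s - partGet μ i)) : Multiset ℕ)

/-- `u` has type `μ`: `u` is a join of independent cycles whose multiset of
heights equals `μ`. -/
def IsTypeOf {L : Type*} [Lattice L] [BoundedOrder L] (u : L) (μ : Multiset ℕ) : Prop :=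
  ∃ (n : ℕ) (z : Fin n → L), (∀ i, IsCycle (z i)) ∧ (∀ i, z i ≠ ⊥) ∧ IndepFun z ∧
    u = Finset.univ.sup z ∧ (↑(List.ofFn (fun i => ht (z i))) : Multiset ℕ) = μ

/-- The lattice metric `d(u,v) = h(u ∨ v) − h(u ∧ v)`. -/
noncomputable def dLat {L : Type*} [Lattice L] (u v : L) : ℕ := ht (u ⊔ v) - ht (u ⊓ v)

/-- The sphere of radius `r` centered at `u`. -/
def sph {L : Type*} [Lattice L] (u : L) (r : ℕ) : Set L := {v | dLat u v ≤ r}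

/-- The `t`-th layer of the sphere of radius `r` centered at `u`. -/
def sphH {L : Type*} [Lattice L] (u : L) (r t : ℕ) : Set L :=
  {v | dLat u v ≤ r ∧ ht v = t}

/-- The elements of type `μ` in the sphere of radius `r` centered at `u`. -/
def sphT {L : Type*} [Lattice L] [BoundedOrder L] (u : L) (r : ℕ) (μ : Multiset ℕ) :
    Set L := {v | dLat u v ≤ r ∧ IsTypeOf v μ}

/-- A finite semi-primary lattice is down-enumerable. -/
def DownEnum (L : Type*) [Lattice L] [BoundedOrder L] : Prop :=
  ∀ (u v : L) (φ μ : Multiset ℕ), IsTypeOf u φ → IsTypeOf v φ →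
    Nat.card {w : L // IsTypeOf w μ ∧ w ≤ u} = Nat.card {w : L // IsTypeOf w μ ∧ w ≤ v}

/-- A finite semi-primary lattice is up-enumerable. -/
def UpEnum (L : Type*) [Lattice L] [BoundedOrder L] : Prop :=
  ∀ (u v : L) (φ μ : Multiset ℕ), IsTypeOf u φ → IsTypeOf v φ →
    Nat.card {w : L // IsTypeOf w μ ∧ u ≤ w} = Nat.card {w : L // IsTypeOf w μ ∧ v ≤ w}

/-- A lattice is enumerable if it is both down- and up-enumerable. -/
def Enumerable (L : Type*) [Lattice L] [BoundedOrder L] : Prop := DownEnum L ∧ UpEnum L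

/-- `α(φ,μ)`: the number of elements of type `μ` below a (any) element of type `φ`. -/
noncomputable def alphaP (L : Type*) [Lattice L] [BoundedOrder L] (φ μ : Multiset ℕ) : ℕ :=
  sSup {n | ∃ u : L, IsTypeOf u φ ∧ n = Nat.card {w : L // IsTypeOf w μ ∧ w ≤ u}}

/-- `β(φ,μ)`: the number of elements of type `μ` above a (any) element of type `φ`. -/
noncomputable def betaP (L : Type*) [Lattice L] [BoundedOrder L] (φ μ : Multiset ℕ) : ℕ :=
  sSup {n | ∃ u : L, IsTypeOf u φ ∧ n = Nat.card {w : L // IsTypeOf w μ ∧ u ≤ w}}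

/-- `α(μ, r₁, …, rₙ)`: the number of chains `x₁ ≤ ⋯ ≤ xₙ ≤ w` with `h(xᵢ) = rᵢ`,
below a (any) element `w` of type `μ`. -/
noncomputable def alphaChain (L : Type*) [Lattice L] [BoundedOrder L] (μ : Multiset ℕ)
    {n : ℕ} (r : Fin n → ℕ) : ℕ :=
  sSup {m | ∃ w : L, IsTypeOf w μ ∧
    m = Nat.card {x : Fin n → L // (∀ i, ht (x i) = r i) ∧ Monotone x ∧ ∀ i, x i ≤ w}}

/-! Write `u` as the join of independent cycles `z_j`. Sorting their heights decreasingly,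
`φ ≤ tp(u)` matches the `i`-th part of `φ` with a cycle `z_{τ i}` of at least that height, and below
it there is an element `y_i` of height exactly `φ_i`. Each `y_i` is again a cycle, and elements
lying below independent ones are independent, so `y_1 ∨ ⋯ ∨ y_k ≤ u` has type `φ`. -/

lemma partGet_eq_zero_of_card_le {μ : Multiset ℕ} {i : ℕ} (h : μ.card ≤ i) : partGet μ i = 0 :=
  List.getD_eq_default _ _ (by simpa using h)

lemma partGet_mem {μ : Multiset ℕ} {i : ℕ} (h : i < μ.card) : partGet μ i ∈ μ := by
  rw [partGet, List.getD_eq_getElem _ _ (by simpa using h)]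
  exact (Multiset.mem_sort _).1 (List.mem_reverse.1 (List.getElem_mem _))

lemma IsPartition.partGet_pos {φ : Multiset ℕ} (hφ : IsPartition φ) {i : ℕ} (h : i < φ.card) :
    0 < partGet φ i :=
  hφ _ (partGet_mem h)

lemma IsPartition.card_le_of_partLE {φ μ : Multiset ℕ} (hφ : IsPartition φ) (hle : PartLE φ μ) :
    φ.card ≤ μ.card := by
  by_contra! h
  have := hle μ.card
  rw [partGet_eq_zero_of_card_le le_rfl] at this
  exact (hφ.partGet_pos h).ne' (Nat.le_zero.1 this)

lemma coe_ofFn_partGet (μ : Multiset ℕ) : (List.ofFn fun i : Fin μ.card => partGet μ i) = μ := by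
  have : (List.ofFn fun i : Fin μ.card => partGet μ i) = (μ.sort (· ≤ ·)).reverse := by
    refine List.ext_getElem (by simp) fun i _ h => ?_
    rw [List.getElem_ofFn, partGet, List.getD_eq_getElem _ _ h]
  rw [this, Multiset.coe_reverse, Multiset.sort_eq]

lemma partGet_ofFn_of_antitone {n : ℕ} {g : Fin n → ℕ} (hg : Antitone g) (i : Fin n) :
    partGet (List.ofFn g) i = g i := by
  have hsort : ((List.ofFn g : Multiset ℕ).sort (· ≤ ·)).reverse = List.ofFn g := by
    refine List.Perm.eq_of_sortedGE ?_ (List.sortedGE_ofFn_iff.2 hg) ?_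
    · exact List.sortedGE_reverse.2 (Multiset.pairwise_sort _ _).sortedLE
    · exact (List.reverse_perm _).trans (Multiset.coe_eq_coe.1 (Multiset.sort_eq _ _))
  rw [partGet, hsort, List.getD_eq_getElem _ _ (by simp), List.getElem_ofFn]

lemma exists_perm_partGet_ofFn {n : ℕ} (f : Fin n → ℕ) :
    ∃ σ : Equiv.Perm (Fin n), ∀ i : Fin n, partGet (List.ofFn f) i = f (σ i) := by
  let σ := Fin.revPerm.trans (Tuple.sort f)
  have hanti : Antitone (f ∘ σ) := fun i j hij => Tuple.monotone_sort f (Fin.rev_le_rev.2 hij)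
  refine ⟨σ, fun i => ?_⟩
  rw [← Multiset.coe_eq_coe.2 (Equiv.Perm.ofFn_comp_perm σ f), partGet_ofFn_of_antitone hanti]
  rfl

lemma exists_embedding_partGet_le {n : ℕ} {φ : Multiset ℕ} (f : Fin n → ℕ) (hφ : IsPartition φ)
    (hle : PartLE φ (List.ofFn f)) :
    ∃ τ : Fin φ.card ↪ Fin n, ∀ i : Fin φ.card, partGet φ i ≤ f (τ i) := by
  obtain ⟨σ, hσ⟩ := exists_perm_partGet_ofFn f
  have hcard : φ.card ≤ n := by simpa using hφ.card_le_of_partLE hle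
  exact ⟨(Fin.castLEEmb hcard).trans σ.toEmbedding,
    fun i => (hle i).trans_eq (hσ (Fin.castLE hcard i))⟩

@[simp]
lemma ht_bot {α : Type*} [Preorder α] [OrderBot α] : ht (⊥ : α) = 0 := by
  simp [ht]

lemma exists_le_ht_eq_of_le {α : Type*} [Preorder α] [OrderBot α] {a : α} {t : ℕ}
    (h : t ≤ ht a) : ∃ b ≤ a, ht b = t := by
  cases ha : Order.height a with
  | top =>
    -- `ht` is the junk value `0` at infinite height, so only `t = 0` occurs here.
    rw [ht, ha, ENat.toNat_top, Nat.le_zero] at h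
    exact ⟨⊥, bot_le, h ▸ ht_bot⟩
  | coe m =>
    rw [ht, ha, ENat.toNat_natCast] at h
    obtain ⟨p, hlast, hlen⟩ := Order.exists_series_of_height_eq_coe a ha
    refine ⟨p ⟨t, by omega⟩, (p.monotone (Fin.le_last _)).trans_eq hlast, ?_⟩
    rw [ht, Order.height_eq_index_of_length_eq_height_last (by rw [hlast, ha, hlen])]
    rfl

section

variable {L : Type*} [Lattice L] [BoundedOrder L]

lemma IsCycle.mono {y z : L} (hz : IsCycle z) (h : y ≤ z) : IsCycle y :=
  IsChain.mono (Set.Icc_subset_Icc_right h) hz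

lemma IndepFun.of_le_comp {m n : ℕ} {z : Fin n → L} {y : Fin m → L} (hz : IndepFun z)
    (τ : Fin m ↪ Fin n) (hyz : ∀ i, y i ≤ z (τ i)) : IndepFun y := by
  intro i
  have hsup : (Finset.univ.erase i).sup y ≤ (Finset.univ.erase (τ i)).sup z :=
    Finset.sup_le fun j hj => (hyz j).trans <| Finset.le_sup <|
      Finset.mem_erase.2 ⟨τ.injective.ne (Finset.ne_of_mem_erase hj), Finset.mem_univ _⟩
  exact le_bot_iff.1 <| (inf_le_inf hsup (hyz i)).trans_eq (hz (τ i))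

end

theorem stmt0_general {L : Type*} [Lattice L] [BoundedOrder L]
    (u : L) (μ φ : Multiset ℕ) (hφ : IsPartition φ)
    (htu : IsTypeOf u μ) (hle : PartLE φ μ) :
    ∃ v : L, v ≤ u ∧ IsTypeOf v φ := by
  obtain ⟨n, z, hcyc, -, hind, rfl, rfl⟩ := htu
  obtain ⟨τ, hτ⟩ := exists_embedding_partGet_le (fun i => ht (z i)) hφ hle
  choose y hyz hy using fun i => exists_le_ht_eq_of_le (hτ i)
  have hy_ne_bot (i : Fin φ.card) : y i ≠ ⊥ := fun hi =>
    (hφ.partGet_pos i.isLt).ne' (by rw [← hy i, hi, ht_bot])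
  refine ⟨Finset.univ.sup y,
    Finset.sup_le fun i _ => (hyz i).trans (Finset.le_sup (Finset.mem_univ _)),
    φ.card, y, fun i => (hcyc _).mono (hyz i), hy_ne_bot, hind.of_le_comp τ hyz, rfl, ?_⟩
  simp only [hy, coe_ofFn_partGet]

/-- Let `L` be a semi-primary lattice, `u ∈ L`, and `φ` a partition
with `φ ≤ tp(u)` componentwise. Then there exists `v ∈ L` with `v ≤ u` and `tp(v) = φ`. -/
theorem stmt0 {L : Type*} [Lattice L] [IsModularLattice L] [BoundedOrder L]
    (hlen : Order.krullDim L < ⊤) (hsp : IsSemiPrimary L)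
    (u : L) (μ φ : Multiset ℕ) (hμ : IsPartition μ) (hφ : IsPartition φ)
    (htu : IsTypeOf u μ) (hle : PartLE φ μ) :
    ∃ v : L, v ≤ u ∧ IsTypeOf v φ :=
  stmt0_general u μ φ hφ htu hle
end

section
/- Let L be a semi-primary lattice, let λ := tp(L), let n be the number of nonzero parts of λ, let u ∈ L, and let u₁,…,u_m be independent cycles distinct from 0 whose join is u. If m < n, then there exist atoms a_{m+1},…,a_n ∈ L such that u₁,…,u_m,a_{m+1},…,a_n are independent. -/
/-!
Each cycle has a unique atom, and in a modular lattice the atoms below a join of independent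
cycles `w₁, …, w_k` all lie below the join of their atoms, an element of height at most `k`.
Below `⊤` there are `n` independent atoms (one under each cycle of a decomposition of `⊤`), whose
join has height at least `n`; so if `k < n` some atom is not below `w₁ ∨ ⋯ ∨ w_k`, hence is independent
of the `wᵢ`. Adding such atoms one at a time gives the result.
-/

open Order

section Height

variable {α : Type*}

theorem isAtomic_of_krullDim_lt_top [PartialOrder α] [OrderBot α] (h : krullDim α < ⊤) :
    IsAtomic α := by
  have hfin (x : α) : height x < ⊤ := by
    have := (height_le_krullDim x).trans_lt h
    rwa [← WithBot.coe_top, WithBot.coe_lt_coe] at this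
  have : WellFoundedLT α := StrictMono.wellFoundedLT (f := height) fun _ _ hxy =>
    height_strictMono hxy (hfin _)
  exact isAtomic_of_orderBot_wellFounded_lt wellFounded_lt

theorem IsAtom.height_eq_one [PartialOrder α] [OrderBot α] {a : α} (ha : IsAtom a) :
    height a = 1 := by
  refine le_antisymm ?_ (by simpa using height_add_one_le ha.bot_lt)
  rw [← Nat.cast_one, height_le_coe_iff]
  intro y hy
  simp [ha.lt_iff.mp hy]

variable [Lattice α]

-- Each `y' < y` with `y' ≰ x` covers `x ⊓ y' < x` (as `x ⊔ y' = y`), so we can induct on the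
-- height of the lower element.
theorem CovBy.height_eq_height_add_one [IsLowerModularLattice α] {x y : α} (hxy : x ⋖ y) :
    height y = height x + 1 := by
  refine le_antisymm ?_ (height_add_one_le hxy.lt)
  suffices key : ∀ N : ℕ, ∀ x y : α, x ⋖ y → height x ≤ N → height y ≤ (N + 1 : ℕ) by
    cases h : height x with
    | top => simp
    | coe N => exact_mod_cast key N x y hxy h.le
  intro N
  induction N using Nat.strong_induction_on with
  | _ N ih =>
    intro x y hxy hx
    rw [height_le_coe_iff]
    intro y' hy'
    by_cases hy'x : y' ≤ x
    · exact (height_mono hy'x).trans_lt (hx.trans_lt (by norm_cast; omega))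
    have hsup : x ⊔ y' = y := (hxy.eq_or_eq le_sup_left (sup_le hxy.le hy'.le)).resolve_left
      fun h => hy'x (h ▸ le_sup_right)
    have hcov : x ⊓ y' ⋖ y' := inf_covBy_of_covBy_sup_left (hsup ▸ hxy)
    have hlt : x ⊓ y' < x :=
      inf_lt_left.mpr fun h => hy'.ne ((sup_eq_right.mpr h).symm.trans hsup)
    obtain ⟨M, hM⟩ := ENat.ne_top_iff_exists.mp
      (((height_mono hlt.le).trans hx).trans_lt (ENat.natCast_lt_top N)).ne
    have hMN : M + 1 ≤ N := by
      have := (height_add_one_le hlt).trans hx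
      rw [← hM] at this
      exact_mod_cast this
    exact (ih M (by omega) _ _ hcov hM.ge).trans_lt (by norm_cast; omega)

theorem height_sup_le_height_add_one_of_isAtom [IsModularLattice α] [OrderBot α] (x : α)
    {a : α} (ha : IsAtom a) : height (x ⊔ a) ≤ height x + 1 := by
  by_cases hax : a ≤ x
  · rw [sup_eq_left.mpr hax]
    exact le_self_add
  have hcov : x ⊓ a ⋖ a := (ha.not_le_iff_disjoint.mp hax).symm.eq_bot ▸ ha.bot_covBy
  exact (covBy_sup_of_inf_covBy_right hcov).height_eq_height_add_one.le

variable [OrderBot α] {ι κ : Type*}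

theorem height_finset_sup_le_card [IsModularLattice α] {s : Finset ι} {f : ι → α}
    (hf : ∀ i ∈ s, IsAtom (f i)) : height (s.sup f) ≤ s.card := by
  classical
  induction s using Finset.induction_on with
  | empty => simp
  | insert i s hi ih =>
    rw [Finset.sup_insert, sup_comm, Finset.card_insert_of_notMem hi, Nat.cast_succ]
    calc height (s.sup f ⊔ f i) ≤ height (s.sup f) + 1 :=
          height_sup_le_height_add_one_of_isAtom _ (hf i (Finset.mem_insert_self i s))
      _ ≤ s.card + 1 := by
          gcongr
          exact ih fun j hj => hf j (Finset.mem_insert_of_mem hj)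

theorem Finset.SupIndep.card_le_height_sup {s : Finset ι} {f : ι → α} (hs : s.SupIndep f)
    (hf : ∀ i ∈ s, f i ≠ ⊥) : s.card ≤ height (s.sup f) := by
  classical
  induction s using Finset.induction_on with
  | empty => simp
  | insert i s hi ih =>
    have hdisj : Disjoint (f i) (s.sup f) :=
      hs (Finset.subset_insert i s) (Finset.mem_insert_self i s) hi
    have hlt : s.sup f < f i ⊔ s.sup f := right_lt_sup.mpr fun h =>
      hf i (Finset.mem_insert_self i s) (hdisj.eq_bot_of_le h)
    rw [Finset.sup_insert, Finset.card_insert_of_notMem hi, Nat.cast_succ]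
    calc (s.card : ℕ∞) + 1 ≤ height (s.sup f) + 1 := by
          gcongr
          exact ih (hs.subset (Finset.subset_insert i s))
            fun j hj => hf j (Finset.mem_insert_of_mem hj)
      _ ≤ height (f i ⊔ s.sup f) := height_add_one_le hlt

theorem Finset.SupIndep.card_le_card_of_sup_le [IsModularLattice α] {s : Finset ι}
    {t : Finset κ} {e : ι → α} {b : κ → α} (he : s.SupIndep e) (he0 : ∀ i ∈ s, e i ≠ ⊥)
    (hb : ∀ j ∈ t, IsAtom (b j)) (hle : s.sup e ≤ t.sup b) : s.card ≤ t.card := by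
  have := (he.card_le_height_sup he0).trans
    ((height_mono hle).trans (height_finset_sup_le_card hb))
  exact_mod_cast this

end Height

section Atoms

variable {α ι : Type*} [Lattice α] [IsModularLattice α]

theorem le_sup_inf_sup_of_le_sup {a x y : α} (h : a ≤ x ⊔ y) : a ≤ x ⊔ y ⊓ (a ⊔ x) := by
  rw [← sup_inf_assoc_of_le y le_sup_right]
  exact le_inf h le_sup_left

variable [OrderBot α]

theorem Disjoint.isAtom_inf_sup {a x y : α} (hxy : Disjoint x y) (ha : IsAtom a)
    (hle : a ≤ x ⊔ y) (hax : ¬ a ≤ x) : IsAtom (y ⊓ (a ⊔ x)) := by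
  have hcov : x ⋖ x ⊔ a := covBy_sup_of_inf_covBy_right
    ((ha.not_le_iff_disjoint.mp hax).symm.eq_bot ▸ ha.bot_covBy)
  have hsup : x ⊔ y ⊓ (a ⊔ x) = x ⊔ a := by
    rw [← sup_inf_assoc_of_le y le_sup_right, inf_eq_right.mpr (sup_le hle le_sup_left),
      sup_comm]
  rw [← bot_covBy_iff, ← (hxy.mono_right inf_le_left).eq_bot]
  exact inf_covBy_of_covBy_sup_left (hsup ▸ hcov)

theorem Disjoint.isAtom_le_sup {x y x' y' : α} (hxy : Disjoint x y)
    (hx : ∀ b, IsAtom b → b ≤ x → b ≤ x') (hy : ∀ b, IsAtom b → b ≤ y → b ≤ y') :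
    ∀ a, IsAtom a → a ≤ x ⊔ y → a ≤ x' ⊔ y' := by
  intro a ha hle
  by_cases hax : a ≤ x
  · exact le_sup_of_le_left (hx a ha hax)
  -- Project `a` to the atom `p` of `y`, then back to an atom of `x`; `a` lies below their join.
  set p := y ⊓ (a ⊔ x)
  have hp : IsAtom p := hxy.isAtom_inf_sup ha hle hax
  have hpy : p ≤ y' := hy p hp inf_le_left
  have hle' : a ≤ p ⊔ x := sup_comm x p ▸ le_sup_inf_sup_of_le_sup hle
  by_cases hap : a ≤ p
  · exact le_sup_of_le_right (hap.trans hpy)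
  have hq : IsAtom (x ⊓ (a ⊔ p)) :=
    (hxy.mono_right inf_le_left).symm.isAtom_inf_sup ha hle' hap
  calc a ≤ p ⊔ x ⊓ (a ⊔ p) := le_sup_inf_sup_of_le_sup hle'
    _ ≤ y' ⊔ x' := sup_le_sup hpy (hx _ hq inf_le_left)
    _ = x' ⊔ y' := sup_comm _ _

theorem Finset.SupIndep.isAtom_le_sup {s : Finset ι} {f g : ι → α} (hs : s.SupIndep f)
    (hfg : ∀ i ∈ s, ∀ b, IsAtom b → b ≤ f i → b ≤ g i) :
    ∀ a, IsAtom a → a ≤ s.sup f → a ≤ s.sup g := by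
  classical
  induction s using Finset.induction_on with
  | empty => simp
  | insert i s hi ih =>
    rw [Finset.sup_insert, Finset.sup_insert]
    exact (hs (Finset.subset_insert i s) (Finset.mem_insert_self i s) hi).isAtom_le_sup
      (hfg i (Finset.mem_insert_self i s))
      (ih (hs.subset (Finset.subset_insert i s)) fun j hj => hfg j (Finset.mem_insert_of_mem hj))

end Atoms

section Cycles

variable {L : Type*} [Lattice L] [BoundedOrder L]

theorem IsAtom.isCycle {a : L} (ha : IsAtom a) : IsCycle a := by
  intro u hu v hv _
  rcases ha.le_iff.mp hu.2 with rfl | rfl <;> rcases ha.le_iff.mp hv.2 with rfl | rfl <;> simp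

theorem IsCycle.isAtom_le {z b : L} (hz : IsCycle z) (hb : IsAtom b) (hbz : b ≤ z) :
    ∀ a, IsAtom a → a ≤ z → a ≤ b := by
  intro a ha haz
  rcases hz.total ⟨bot_le, haz⟩ ⟨bot_le, hbz⟩ with h | h
  · exact h
  · exact ((ha.le_iff_eq hb.ne_bot).mp h).ge

theorem indepFun_iff_supIndep {n : ℕ} {z : Fin n → L} :
    IndepFun z ↔ Finset.univ.SupIndep z := by
  simp [IndepFun, Finset.supIndep_iff_disjoint_erase, disjoint_iff, inf_comm]

theorem IndepFun.snoc [IsModularLattice L] {n : ℕ} {z : Fin n → L} {x : L} (hz : IndepFun z)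
    (hx : Disjoint x (Finset.univ.sup z)) : IndepFun (Fin.snoc z x) := by
  rw [indepFun_iff_supIndep] at hz ⊢
  rw [Fin.univ_succAbove n (Fin.last n), Finset.cons_eq_insert]
  refine Finset.SupIndep.insert ?_ ?_
  · rw [Finset.supIndep_map]
    simpa using hz
  · simpa [Finset.sup_map] using hx

variable [IsModularLattice L] [IsAtomic L] {ι κ : Type*}

theorem Finset.SupIndep.exists_isAtom_disjoint_sup {s : Finset ι} {t : Finset κ} {w : ι → L}
    {c : κ → L} (hw : s.SupIndep w) (hcyc : ∀ i ∈ s, IsCycle (w i)) (hw0 : ∀ i ∈ s, w i ≠ ⊥)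
    (hc : t.SupIndep c) (hc0 : ∀ j ∈ t, c j ≠ ⊥) (hst : s.card < t.card) :
    ∃ a, IsAtom a ∧ Disjoint a (s.sup w) := by
  by_contra! hall
  choose! b hb hbw using fun i (hi : i ∈ s) =>
    (eq_bot_or_exists_atom_le (w i)).resolve_left (hw0 i hi)
  choose! e he hec using fun j (hj : j ∈ t) =>
    (eq_bot_or_exists_atom_le (c j)).resolve_left (hc0 j hj)
  have hwb := hw.isAtom_le_sup fun i hi => (hcyc i hi).isAtom_le (hb i hi) (hbw i hi)
  have heb : t.sup e ≤ s.sup b := Finset.sup_le fun j hj =>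
    hwb _ (he j hj) ((he j hj).not_disjoint_iff_le.mp (hall _ (he j hj)))
  exact hst.not_ge ((hc.mono hec).card_le_card_of_sup_le (fun j hj => (he j hj).ne_bot) hb heb)

theorem IndepFun.exists_isAtom_append {n m : ℕ} {c : Fin n → L} (hc : IndepFun c)
    (hc0 : ∀ i, c i ≠ ⊥) {z : Fin m → L} (hz : IndepFun z) (hcyc : ∀ i, IsCycle (z i))
    (hz0 : ∀ i, z i ≠ ⊥) (j : ℕ) (hj : m + j ≤ n) :
    ∃ a : Fin j → L, (∀ i, IsAtom (a i)) ∧ IndepFun (Fin.append z a) := by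
  induction j with
  | zero => exact ⟨Fin.elim0, fun i => i.elim0, by rw [Fin.append_elim0]; exact hz⟩
  | succ j ih =>
    obtain ⟨a, ha, hza⟩ := ih (by omega)
    have hcyc' : ∀ i, IsCycle (Fin.append z a i) :=
      Fin.addCases (fun i => by simpa using hcyc i) fun i => by simpa using (ha i).isCycle
    have hza0 : ∀ i, Fin.append z a i ≠ ⊥ :=
      Fin.addCases (fun i => by simpa using hz0 i) fun i => by simpa using (ha i).ne_bot
    obtain ⟨x, hx, hxd⟩ := (indepFun_iff_supIndep.mp hza).exists_isAtom_disjoint_sup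
      (fun i _ => hcyc' i) (fun i _ => hza0 i) (indepFun_iff_supIndep.mp hc)
      (fun i _ => hc0 i) (by simpa using Nat.lt_of_succ_le hj)
    refine ⟨Fin.snoc a x, Fin.lastCases (by simpa using hx) fun i => by simpa using ha i, ?_⟩
    rw [Fin.append_snoc]
    exact hza.snoc hxd

end Cycles

theorem stmt2_general {L : Type*} [Lattice L] [IsModularLattice L] [BoundedOrder L]
    (hlen : Order.krullDim L < ⊤)
    (lam : Multiset ℕ) (htop : IsTypeOf (⊤ : L) lam)
    (n : ℕ) (hn : n = Multiset.card lam)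
    (m : ℕ) (z : Fin m → L)
    (hcyc : ∀ i, IsCycle (z i)) (hne : ∀ i, z i ≠ ⊥) (hind : IndepFun z)
    (hmn : m < n) :
    ∃ a : Fin (n - m) → L, (∀ j, ht (a j) = 1) ∧ IndepFun (Fin.append z a) := by
  have := isAtomic_of_krullDim_lt_top hlen
  obtain ⟨k, c, -, hc0, hc, -, rfl⟩ := htop
  obtain rfl : n = k := by simpa using hn
  obtain ⟨a, ha, hza⟩ := hc.exists_isAtom_append hc0 hind hcyc hne (n - m) (by omega)
  exact ⟨a, fun j => by simp [ht, (ha j).height_eq_one], hza⟩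

/-- In a semi-primary lattice `L` with `λ := tp(L)` having `n` nonzero
parts, let `u₁,…,u_m` be independent nonzero cycles with join `u`. If `m < n`, then there
are atoms `a_{m+1},…,a_n` such that `u₁,…,u_m,a_{m+1},…,a_n` are independent. -/
theorem stmt2 {L : Type*} [Lattice L] [IsModularLattice L] [BoundedOrder L]
    (hlen : Order.krullDim L < ⊤) (hsp : IsSemiPrimary L)
    (lam : Multiset ℕ) (hlam : IsPartition lam) (htop : IsTypeOf (⊤ : L) lam)
    (n : ℕ) (hn : n = Multiset.card lam)
    (u : L) (m : ℕ) (z : Fin m → L)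
    (hcyc : ∀ i, IsCycle (z i)) (hne : ∀ i, z i ≠ ⊥) (hind : IndepFun z)
    (hu : u = Finset.univ.sup z) (hmn : m < n) :
    ∃ a : Fin (n - m) → L, (∀ j, ht (a j) = 1) ∧ IndepFun (Fin.append z a) :=
  stmt2_general hlen lam htop n hn m z hcyc hne hind hmn
end

section
/- Let L be a finite modular lattice, let u₁, u₂ ∈ L both have height l, and let r ∈ ℕ. If S(u₁,r) ∩ S(u₂,r) ≠ ∅, then h(u₁ ∧ u₂) ≥ l − r. -/
set_option linter.unusedSectionVars false

section Aux

variable {L : Type*} [Lattice L] [IsModularLattice L] [BoundedOrder L] [Fintype L]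

lemma ht_lt_top (x : L) : Order.height x < ⊤ := by
  refine lt_of_le_of_lt (Order.height_le fun p _ => ?_) (ENat.coe_lt_top (Fintype.card L))
  exact_mod_cast (p.length_lt_card).le

lemma height_eq_ht (x : L) : Order.height x = (ht x : ℕ∞) := by
  rw [ht, ENat.coe_toNat (ht_lt_top x).ne]

lemma ht_mono {x y : L} (h : x ≤ y) : ht x ≤ ht y := by
  have := Order.height_mono h
  rw [height_eq_ht, height_eq_ht] at this
  exact_mod_cast this

lemma ht_strictMono {x y : L} (h : x < y) : ht x < ht y := by
  have := Order.height_strictMono h (ht_lt_top x)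
  rw [height_eq_ht, height_eq_ht] at this
  exact_mod_cast this

lemma ht_modular (b : L) : ∀ n (a : L), ht a = n → ht a + ht b ≤ ht (a ⊓ b) + ht (a ⊔ b) := by
  intro n
  induction n with
  | zero =>
    intro a ha
    have : a = ⊥ := by
      have : Order.height a = 0 := by rw [height_eq_ht, ha]; rfl
      exact (Order.height_eq_zero.mp this).eq_bot
    subst this
    simp [ha, ht_mono le_sup_right]
  | succ n ih =>
    intro a ha
    obtain ⟨p, hlast, hlen⟩ := Order.exists_series_of_height_eq_coe a
      (by rw [height_eq_ht, ha])
    set y := p ⟨n, by omega⟩ with hy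
    have hylt : y < a := by
      have h := p.strictMono (show (⟨n, by omega⟩ : Fin (p.length + 1)) < Fin.last p.length by
        simp [Fin.lt_iff_val_lt_val, hlen])
      rw [show p (Fin.last p.length) = a from hlast] at h
      exact h
    have hyht : ht y = n := by
      have h1 : (n : ℕ∞) ≤ Order.height y := by
        simpa [hy] using Order.index_le_height p ⟨n, by omega⟩
      have h2 : ht y < ht a := ht_strictMono hylt
      rw [height_eq_ht] at h1
      have := Nat.cast_le.mp h1
      omega
    have hIH := ih y hyht
    have hinf : y ⊓ b ≤ a ⊓ b := inf_le_inf_right b hylt.le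
    have hsup : y ⊔ b ≤ a ⊔ b := sup_le_sup_right hylt.le b
    have : y ⊓ b < a ⊓ b ∨ y ⊔ b < a ⊔ b := by
      by_contra hc
      push_neg at hc
      have h1 : a ⊓ b ≤ y ⊓ b := by
        rcases lt_or_eq_of_le hinf with h | h
        · exact absurd h hc.1
        · exact h.ge
      have h2 : a ⊔ b ≤ y ⊔ b := by
        rcases lt_or_eq_of_le hsup with h | h
        · exact absurd h hc.2
        · exact h.ge
      exact hylt.ne (eq_of_le_of_inf_le_of_sup_le hylt.le h1 h2)
    rcases this with h | h
    · have := ht_strictMono h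
      have := ht_mono hsup
      omega
    · have := ht_strictMono h
      have := ht_mono hinf
      omega

lemma ht_modular' (a b : L) : ht a + ht b ≤ ht (a ⊓ b) + ht (a ⊔ b) :=
  ht_modular b (ht a) a rfl

end Aux


/-- In a finite modular lattice, if `u₁, u₂` both have height `l` and
the spheres of radius `r` around them intersect, then `h(u₁ ∧ u₂) ≥ l − r`. -/
theorem stmt10 {L : Type*} [Lattice L] [IsModularLattice L] [BoundedOrder L] [Fintype L]
    (u₁ u₂ : L) (l r : ℕ) (h₁ : ht u₁ = l) (h₂ : ht u₂ = l)
    (hne : (sph u₁ r ∩ sph u₂ r).Nonempty) :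
    l - r ≤ ht (u₁ ⊓ u₂) := by
  obtain ⟨v, hv₁, hv₂⟩ := hne
  have d1 : ht (u₁ ⊔ v) - ht (u₁ ⊓ v) ≤ r := hv₁
  have d2 : ht (u₂ ⊔ v) - ht (u₂ ⊓ v) ≤ r := hv₂
  have m1 := ht_modular' u₁ v
  have m2 := ht_modular' u₂ v
  have hs1 : l ≤ ht (u₁ ⊔ v) := h₁ ▸ ht_mono le_sup_left
  have hs2 : l ≤ ht (u₂ ⊔ v) := h₂ ▸ ht_mono le_sup_left
  have m3 := ht_modular' (u₁ ⊓ v) (u₂ ⊓ v)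
  have hab : ht ((u₁ ⊓ v) ⊔ (u₂ ⊓ v)) ≤ ht v :=
    ht_mono (sup_le inf_le_right inf_le_right)
  have habu : ht ((u₁ ⊓ v) ⊓ (u₂ ⊓ v)) ≤ ht (u₁ ⊓ u₂) :=
    ht_mono (le_inf (inf_le_left.trans inf_le_left) (inf_le_right.trans inf_le_left))
  have hi1 : ht (u₁ ⊓ v) ≤ ht v := ht_mono inf_le_right
  have hi2 : ht (u₂ ⊓ v) ≤ ht v := ht_mono inf_le_right
  omega
end

section
/- Let L be a finite modular lattice, let u₁, u₂ ∈ L both have height l, let r ∈ ℕ, and let t ∈ {l−r, l−r+2, …, l+r−2, l+r} (i.e., |t−l| ≤ r and t−l has the same parity as r) with 0 ≤ t ≤ h(1). Then S(u₁,r) ∩ S(u₂,r) = ∅ if and only if S(u₁,r,t) ∩ S(u₂,r,t) = ∅. -/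
/-!
In a finite modular lattice `h(x ∨ y) + h(x ∧ y) = h x + h y`, so `d(u₁,u₂) = 2(l - h(u₁ ∧ u₂))`,
and a point `v` in both spheres gives `d(u₁,u₂) ≤ 2r` by the triangle inequality.
A common point of height `t` is then found below `u₁ ∧ u₂` when `t ≤ h(u₁ ∧ u₂)`, above `u₁ ∨ u₂`
when `h(u₁ ∨ u₂) ≤ t`, and otherwise as `x₁ ∨ x₂` with `xᵢ ∈ [u₁ ∧ u₂, uᵢ]` whose heights split
`t - h(u₁ ∧ u₂)` as evenly as possible. Since `d(x, y) ≡ h x + h y (mod 2)`, the parity of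
`t + l + r` is what forbids an uneven split when `d(u₁,u₂) = 2r`.
-/

open Order

section FiniteHeight

variable {L : Type*} [Preorder L] [Finite L]

lemma height_ne_top_of_finite (x : L) : height x ≠ ⊤ := by
  have := Fintype.ofFinite L
  rw [Ne, height_eq_top_iff, not_forall]
  exact ⟨Fintype.card L, fun ⟨p, _, hp⟩ => (hp ▸ p.length_lt_card).false⟩

lemma natCast_ht (x : L) : (ht x : ℕ∞) = height x :=
  ENat.natCast_toNat (height_ne_top_of_finite x)

lemma ht_mono_s11 : Monotone (ht : L → ℕ) := fun x y h => by
  have := height_mono h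
  rwa [← natCast_ht, ← natCast_ht, Nat.cast_le] at this

lemma ht_strictMono_s11 : StrictMono (ht : L → ℕ) := fun x y h => by
  have := height_strictMono h (height_ne_top_of_finite x).lt_top
  rwa [← natCast_ht, ← natCast_ht, Nat.cast_lt] at this

lemma exists_lt_ht_eq {y : L} {n : ℕ} (h : n < ht y) : ∃ x < y, ht x = n := by
  rw [← Nat.cast_lt (α := ℕ∞), natCast_ht] at h
  obtain ⟨x, hxy, hx⟩ := (coe_lt_height_iff (height_ne_top_of_finite y).lt_top).1 h
  exact ⟨x, hxy, by rw [← Nat.cast_inj (R := ℕ∞), natCast_ht, hx]⟩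

lemma exists_le_ht_eq {y : L} {n : ℕ} (h : n ≤ ht y) : ∃ x ≤ y, ht x = n := by
  rcases h.lt_or_eq with h | rfl
  · obtain ⟨x, hxy, hx⟩ := exists_lt_ht_eq h
    exact ⟨x, hxy.le, hx⟩
  · exact ⟨y, le_rfl, rfl⟩

end FiniteHeight

section LowerModular

variable {L : Type*} [Lattice L] [IsLowerModularLattice L] [Finite L]

lemma ht_eq_add_one_of_covBy {x y : L} (hxy : x ⋖ y) : ht y = ht x + 1 := by
  induction hn : ht y using Nat.strong_induction_on generalizing x y with
  | _ n ih =>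
  have hxy' := ht_strictMono_s11 hxy.lt
  obtain ⟨c, hcy, hc⟩ := exists_lt_ht_eq (y := y) (n := ht y - 1) (by omega)
  by_cases hxc : x = c
  · subst hxc; omega
  -- `c` is another lower cover of `y`, so `x ⊔ c = y`, lower modularity gives `x ⊓ c ⋖ c`, and
  -- induction applies at `c`.
  have hcy' : c ⋖ y := ⟨hcy, fun z hcz hzy => by
    have := ht_strictMono_s11 hcz; have := ht_strictMono_s11 hzy; omega⟩
  have hcx : ¬ c ≤ x := fun h => hcy'.2 (h.lt_of_ne' hxc) hxy.lt
  have hsup : x ⊔ c = y := (hxy.eq_or_eq le_sup_left (sup_le hxy.le hcy.le)).resolve_left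
    fun h => hcx (h ▸ le_sup_right)
  have hinf_covBy : x ⊓ c ⋖ c := inf_covBy_of_covBy_sup_left (hsup ▸ hxy)
  have hinf_lt : x ⊓ c < x := inf_lt_left.2 fun h => hxy.2 (h.lt_of_ne hxc) hcy
  have := ih (ht c) (by omega) hinf_covBy rfl
  have := ht_strictMono_s11 hinf_lt
  omega

lemma exists_ht_eq_of_le {x y : L} (hxy : x ≤ y) {s : ℕ} (hxs : ht x ≤ s) (hsy : s ≤ ht y) :
    ∃ w, x ≤ w ∧ w ≤ y ∧ ht w = s := by
  induction hn : s - ht x generalizing x with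
  | zero => exact ⟨x, le_rfl, hxy, by omega⟩
  | succ n ih =>
  obtain ⟨c, hxc, hcy⟩ := exists_covBy_le_of_lt (hxy.lt_of_ne fun h => by subst h; omega)
  have := ht_eq_add_one_of_covBy hxc
  obtain ⟨w, hcw, hwy, hw⟩ := ih hcy (by omega) (by omega)
  exact ⟨w, hxc.le.trans hcw, hwy, hw⟩

end LowerModular

section Metric

variable {L : Type*} [Lattice L]

lemma dLat_comm (a b : L) : dLat a b = dLat b a := by
  rw [dLat, dLat, sup_comm, inf_comm]

lemma dLat_eq_of_le {a b : L} (h : a ≤ b) : dLat a b = ht b - ht a := by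
  rw [dLat, sup_eq_right.2 h, inf_eq_left.2 h]

lemma dLat_eq_of_ge {a b : L} (h : b ≤ a) : dLat a b = ht a - ht b := by
  rw [dLat, sup_eq_left.2 h, inf_eq_right.2 h]

lemma sphH_subset_sph (u : L) (r t : ℕ) : sphH u r t ⊆ sph u r := fun _ hv => hv.1

lemma sphH_inter_nonempty_of_le_ht_inf [Finite L] {u₁ u₂ : L} {l r t : ℕ}
    (h₁ : ht u₁ = l) (h₂ : ht u₂ = l) (htl : l - r ≤ t) (hlow : t ≤ ht (u₁ ⊓ u₂)) :
    (sphH u₁ r t ∩ sphH u₂ r t).Nonempty := by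
  obtain ⟨w, hw, rfl⟩ := exists_le_ht_eq hlow
  refine ⟨w, ⟨?_, rfl⟩, ⟨?_, rfl⟩⟩
  · rw [dLat_eq_of_ge (hw.trans inf_le_left)]; omega
  · rw [dLat_eq_of_ge (hw.trans inf_le_right)]; omega

end Metric

section Modular

variable {L : Type*} [Lattice L] [IsModularLattice L] [Finite L]

lemma ht_sup_add_ht_inf (a b : L) : ht (a ⊔ b) + ht (a ⊓ b) = ht a + ht b := by
  induction hn : ht b - ht (a ⊓ b) generalizing a with
  | zero =>
    have hba : b ≤ a := by
      by_contra hba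
      have := ht_strictMono_s11 (inf_lt_right.2 hba)
      omega
    rw [sup_eq_left.2 hba, inf_eq_right.2 hba]
  | succ n ih =>
  -- Climb from `a` to `a ⊔ c` along a cover `a ⊓ b ⋖ c ≤ b`; both sides grow by one.
  obtain ⟨c, hc, hcb⟩ := exists_covBy_le_of_lt (inf_lt_right.2 fun hba => by
    rw [inf_eq_right.2 hba] at hn; omega)
  have hac : a ⊓ c = a ⊓ b := le_antisymm (inf_le_inf_left a hcb) (le_inf inf_le_left hc.le)
  have ha : ht (a ⊔ c) = ht a + 1 :=
    ht_eq_add_one_of_covBy (covBy_sup_of_inf_covBy_right (hac ▸ hc))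
  have hinf : (a ⊔ c) ⊓ b = c := by
    rw [sup_comm, sup_inf_assoc_of_le a hcb, sup_eq_left.2 hc.le]
  have hsup : (a ⊔ c) ⊔ b = a ⊔ b := by rw [sup_assoc, sup_eq_right.2 hcb]
  have := ht_eq_add_one_of_covBy hc
  have := ih (a ⊔ c) (by rw [hinf]; omega)
  rw [hinf, hsup] at this
  omega

lemma dLat_add_ht_add_ht (a b : L) : dLat a b + ht a + ht b = 2 * ht (a ⊔ b) := by
  have := ht_sup_add_ht_inf a b
  have := ht_mono_s11 (inf_le_sup : a ⊓ b ≤ a ⊔ b)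
  rw [dLat]
  omega

lemma dLat_triangle (a b c : L) : dLat a c ≤ dLat a b + dLat b c := by
  have := dLat_add_ht_add_ht a c
  have := dLat_add_ht_add_ht a b
  have := dLat_add_ht_add_ht b c
  have := ht_sup_add_ht_inf (a ⊔ b) (b ⊔ c)
  have : ht (a ⊔ c) ≤ ht ((a ⊔ b) ⊔ (b ⊔ c)) :=
    ht_mono_s11 (sup_le_sup le_sup_left le_sup_right)
  have : ht b ≤ ht ((a ⊔ b) ⊓ (b ⊔ c)) := ht_mono_s11 (le_inf le_sup_right le_sup_left)
  omega

lemma dLat_sup_add {u x y : L} (hxu : x ≤ u) (h : u ⊓ y = x ⊓ y) :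
    dLat u (x ⊔ y) + ht x + ht (x ⊓ y) = ht u + ht y := by
  have := dLat_add_ht_add_ht u (x ⊔ y)
  have := ht_sup_add_ht_inf u y
  have := ht_sup_add_ht_inf x y
  rw [← sup_assoc, sup_eq_left.2 hxu] at *
  rw [h] at *
  omega

lemma ht_le_ht_inf_add_of_mem_sph_inter {u₁ u₂ v : L} {r : ℕ} (h : ht u₁ = ht u₂)
    (hv : v ∈ sph u₁ r ∩ sph u₂ r) : ht u₁ ≤ ht (u₁ ⊓ u₂) + r := by
  obtain ⟨hv₁, hv₂⟩ : dLat u₁ v ≤ r ∧ dLat u₂ v ≤ r := hv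
  have := dLat_triangle u₁ v u₂
  have := dLat_add_ht_add_ht u₁ u₂
  have := ht_sup_add_ht_inf u₁ u₂
  rw [dLat_comm v] at *
  omega

variable {u₁ u₂ : L} {l r t : ℕ}

lemma sphH_inter_nonempty_of_ht_sup_le [OrderTop L] (h₁ : ht u₁ = l) (h₂ : ht u₂ = l)
    (htu : t ≤ l + r) (htop : t ≤ ht (⊤ : L)) (hhigh : ht (u₁ ⊔ u₂) ≤ t) :
    (sphH u₁ r t ∩ sphH u₂ r t).Nonempty := by
  obtain ⟨w, hw, -, rfl⟩ := exists_ht_eq_of_le le_top hhigh htop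
  refine ⟨w, ⟨?_, rfl⟩, ⟨?_, rfl⟩⟩
  · rw [dLat_eq_of_le (le_sup_left.trans hw)]; omega
  · rw [dLat_eq_of_le (le_sup_right.trans hw)]; omega

lemma sphH_inter_nonempty_of_ht_inf_le_of_le_ht_sup (h₁ : ht u₁ = l) (h₂ : ht u₂ = l)
    (hr : l ≤ ht (u₁ ⊓ u₂) + r) (hpar : (t + l + r) % 2 = 0)
    (hlow : ht (u₁ ⊓ u₂) ≤ t) (hhigh : t ≤ ht (u₁ ⊔ u₂)) :
    (sphH u₁ r t ∩ sphH u₂ r t).Nonempty := by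
  set k := ht (u₁ ⊓ u₂)
  have := ht_sup_add_ht_inf u₁ u₂
  obtain ⟨x₁, hkx₁, hx₁u, hx₁⟩ :=
    exists_ht_eq_of_le (inf_le_left : u₁ ⊓ u₂ ≤ u₁) (s := k + (t - k + 1) / 2) (by omega) (by omega)
  obtain ⟨x₂, hkx₂, hx₂u, hx₂⟩ :=
    exists_ht_eq_of_le (inf_le_right : u₁ ⊓ u₂ ≤ u₂) (s := k + (t - k) / 2) (by omega) (by omega)
  have hx : x₁ ⊓ x₂ = u₁ ⊓ u₂ := le_antisymm (inf_le_inf hx₁u hx₂u) (le_inf hkx₁ hkx₂)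
  have hx₁ : u₁ ⊓ x₂ = x₁ ⊓ x₂ :=
    hx ▸ le_antisymm (inf_le_inf_left u₁ hx₂u) (le_inf inf_le_left hkx₂)
  have hx₂ : u₂ ⊓ x₁ = x₂ ⊓ x₁ := by
    rw [inf_comm x₂, hx]
    exact le_antisymm (inf_comm u₁ u₂ ▸ inf_le_inf_left u₂ hx₁u) (le_inf inf_le_right hkx₁)
  have hd₁ := dLat_sup_add hx₁u hx₁
  have hd₂ := dLat_sup_add hx₂u hx₂
  have hw := ht_sup_add_ht_inf x₁ x₂
  rw [sup_comm x₂, inf_comm x₂] at hd₂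
  rw [hx] at hd₁ hd₂ hw
  exact ⟨x₁ ⊔ x₂, ⟨by omega, by omega⟩, ⟨by omega, by omega⟩⟩

end Modular

/-- In a finite modular lattice, let `u₁, u₂` have height `l`, `r ∈ ℕ`,
and `t` with `|t − l| ≤ r`, `t − l` of the same parity as `r`, and `0 ≤ t ≤ h(1)`. Then
`S(u₁,r) ∩ S(u₂,r) = ∅` iff `S(u₁,r,t) ∩ S(u₂,r,t) = ∅`. -/
theorem stmt11 {L : Type*} [Lattice L] [IsModularLattice L] [BoundedOrder L] [Fintype L]
    (u₁ u₂ : L) (l r t : ℕ) (h₁ : ht u₁ = l) (h₂ : ht u₂ = l)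
    (htl : l - r ≤ t) (htu : t ≤ l + r) (hpar : (t + l + r) % 2 = 0)
    (htop : t ≤ ht (⊤ : L)) :
    sph u₁ r ∩ sph u₂ r = ∅ ↔ sphH u₁ r t ∩ sphH u₂ r t = ∅ := by
  simp only [← Set.not_nonempty_iff_eq_empty, not_iff_not]
  refine ⟨fun ⟨v, hv⟩ => ?_,
    .mono (Set.inter_subset_inter (sphH_subset_sph u₁ r t) (sphH_subset_sph u₂ r t))⟩
  have hr : l ≤ ht (u₁ ⊓ u₂) + r := h₁ ▸ ht_le_ht_inf_add_of_mem_sph_inter (h₁.trans h₂.symm) hv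
  rcases le_total t (ht (u₁ ⊓ u₂)) with hlow | hlow
  · exact sphH_inter_nonempty_of_le_ht_inf h₁ h₂ htl hlow
  rcases le_total t (ht (u₁ ⊔ u₂)) with hhigh | hhigh
  · exact sphH_inter_nonempty_of_ht_inf_le_of_le_ht_sup h₁ h₂ hr hpar hlow hhigh
  · exact sphH_inter_nonempty_of_ht_sup_le h₁ h₂ htu htop hhigh
end

section
/- Let M be a finite metric space with metric d, let N be a subset of M, let C be a subset of N with minimum distance D(C) ≥ D for some D ∈ ℝ, let r := ⌊(D−1)/2⌋, and let T be a subset of M such that min_{u∈N} |S(u,r) ∩ T| > 0. Then |C| ≤ |T| / min_{u∈N} |S(u,r) ∩ T|. -/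
/-- Sphere packing bound in a finite metric space: if `C ⊆ N ⊆ M` has
minimum distance at least `D`, `r := ⌊(D−1)/2⌋`, and `T ⊆ M` satisfies
`min_{u∈N} |S(u,r) ∩ T| > 0`, then `|C| ≤ |T| / min_{u∈N} |S(u,r) ∩ T|`. -/
theorem stmt12 {M : Type*} [MetricSpace M] [Fintype M]
    (N C T : Set M) (hCN : C ⊆ N) (D : ℝ)
    (hmin : ∀ u ∈ C, ∀ v ∈ C, u ≠ v → D ≤ dist u v)
    (r : ℝ) (hr : r = ⌊(D - 1) / 2⌋)
    (m : ℕ) (hm : m = sInf {k : ℕ | ∃ u ∈ N, k = (Metric.closedBall u r ∩ T).ncard})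
    (hmpos : 0 < m) :
    (C.ncard : ℝ) ≤ (T.ncard : ℝ) / (m : ℝ) := by
  classical
  have h2r : 2 * r < D := by
    have h1 : (⌊(D - 1) / 2⌋ : ℝ) ≤ (D - 1) / 2 := Int.floor_le _
    rw [hr]; linarith
  -- balls around distinct codewords are disjoint
  have key : ∀ u ∈ C, m ≤ (Metric.closedBall u r ∩ T).ncard := by
    intro u hu
    rw [hm]
    exact Nat.sInf_le ⟨u, hCN hu, rfl⟩
  set F : Finset M := C.toFinset with hF
  set f : M → Finset M := fun u => (Metric.closedBall u r ∩ T).toFinset with hf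
  have hdisj : ∀ u ∈ F, ∀ v ∈ F, u ≠ v → Disjoint (f u) (f v) := by
    intro u hu v hv huv
    rw [Finset.disjoint_left]
    intro x hxu hxv
    simp only [hf, Set.mem_toFinset, Set.mem_inter_iff, Metric.mem_closedBall] at hxu hxv
    have hD : D ≤ dist u v :=
      hmin u (Set.mem_toFinset.mp hu) v (Set.mem_toFinset.mp hv) huv
    have := dist_triangle u x v
    rw [dist_comm u x] at this
    linarith [hxu.1, hxv.1]
  have hsub : F.biUnion f ⊆ T.toFinset := by
    intro x hx
    simp only [Finset.mem_biUnion, hf, Set.mem_toFinset, Set.mem_inter_iff] at hx ⊢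
    obtain ⟨u, _, _, hxT⟩ := hx
    exact hxT
  have hcard : m * F.card ≤ T.toFinset.card := by
    calc m * F.card = ∑ _u ∈ F, m := by rw [Finset.sum_const, smul_eq_mul, mul_comm]
    _ ≤ ∑ u ∈ F, (f u).card := by
        apply Finset.sum_le_sum
        intro u hu
        have := key u (Set.mem_toFinset.mp hu)
        rwa [Set.ncard_eq_toFinset_card'] at this
    _ = (F.biUnion f).card := (Finset.card_biUnion hdisj).symm
    _ ≤ T.toFinset.card := Finset.card_le_card hsub
  rw [le_div_iff₀ (by exact_mod_cast hmpos)]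
  have : (C.ncard : ℝ) * m = (m * F.card : ℕ) := by
    rw [Set.ncard_eq_toFinset_card']; push_cast; ring
  rw [this, Set.ncard_eq_toFinset_card']
  exact_mod_cast hcard
end
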